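/- Let m ≥ 4 and let G = ⟨a, b, c | a^{2^{m-2}} = 1, b^2 = 1, c^2 = 1, ab = ba, ac = ca, c^{-1}bc = a^{2^{m-3}}b⟩ (the group G_4). Then |G| = 2^m, G' = ⟨a^{2^{m-3}}⟩ has order 2, Z(G) = ⟨a⟩ is cyclic of order 2^{m-2}, and cl(G) = 2. -/

import Mathlib

/-- The nilpotency class of a group, as the least `n` with `γ_{n+1}(G) = 1`. -/
noncomputable def nilClass (G : Type*) [Group G] : ℕ :=
  sInf {n : ℕ | (⊤ : Subgroup G).lowerCentralSeries n = ⊥}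

/-- Relators of
`G₄ = ⟨a,b,c ∣ a^{2^{m-2}}=1, b²=1, c²=1, ab=ba, ac=ca, c⁻¹bc=a^{2^{m-3}}b⟩`. -/
def G4rels (m : ℕ) : Set (FreeGroup (Fin 3)) :=
  { FreeGroup.of 0 ^ (2 ^ (m - 2)),
    FreeGroup.of 1 ^ 2,
    FreeGroup.of 2 ^ 2,
    FreeGroup.of 0 * FreeGroup.of 1 * (FreeGroup.of 0)⁻¹ * (FreeGroup.of 1)⁻¹,
    FreeGroup.of 0 * FreeGroup.of 2 * (FreeGroup.of 0)⁻¹ * (FreeGroup.of 2)⁻¹,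
    (FreeGroup.of 2)⁻¹ * FreeGroup.of 1 * FreeGroup.of 2
      * (FreeGroup.of 0 ^ (2 ^ (m - 3)) * FreeGroup.of 1)⁻¹ }

/-! Writing `m = k + 3`, `G₄` is the Heisenberg group of the pairing
`ZMod 2 × ZMod 2 → ZMod (2 ^ (k + 1))`, `(x, y) ↦ 2 ^ k x y`, with `c`, `b`, `a` going to the
unit vectors of its three coordinates: the relations are exactly what makes the normal form
`⟨x, y, z⟩ ↦ a ^ z * b ^ y * c ^ x` a homomorphism out of the model, and it is inverse to the
map given by the presentation. In this model of order `2 ^ (k + 3)` the centre is the last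
coordinate, generated by `a`, and the commutators are the values of the pairing, i.e. the powers
of `a ^ 2 ^ k`; as these are central, the class is 2. -/

open scoped commutatorElement

open Subgroup

/-- For `β` the multiplication of a ring, `⟨x, y, z⟩` is the matrix
`[[1, x, z], [0, 1, y], [0, 0, 1]]`. -/
@[ext]
structure HeisenbergGroup {X Y Z : Type*} [AddCommGroup X] [AddCommGroup Y] [AddCommGroup Z]
    (β : X →+ Y →+ Z) where
  x : X
  y : Y
  z : Z

namespace HeisenbergGroup

variable {X Y Z : Type*} [AddCommGroup X] [AddCommGroup Y] [AddCommGroup Z] {β : X →+ Y →+ Z}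

instance : Mul (HeisenbergGroup β) :=
  ⟨fun p q ↦ ⟨p.x + q.x, p.y + q.y, p.z + q.z + β p.x q.y⟩⟩
instance : One (HeisenbergGroup β) := ⟨⟨0, 0, 0⟩⟩
instance : Inv (HeisenbergGroup β) := ⟨fun p ↦ ⟨-p.x, -p.y, -p.z + β p.x p.y⟩⟩

@[simp] lemma mul_x (p q : HeisenbergGroup β) : (p * q).x = p.x + q.x := rfl
@[simp] lemma mul_y (p q : HeisenbergGroup β) : (p * q).y = p.y + q.y := rfl
@[simp] lemma mul_z (p q : HeisenbergGroup β) : (p * q).z = p.z + q.z + β p.x q.y := rfl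
@[simp] lemma one_x : (1 : HeisenbergGroup β).x = 0 := rfl
@[simp] lemma one_y : (1 : HeisenbergGroup β).y = 0 := rfl
@[simp] lemma one_z : (1 : HeisenbergGroup β).z = 0 := rfl
@[simp] lemma inv_x (p : HeisenbergGroup β) : p⁻¹.x = -p.x := rfl
@[simp] lemma inv_y (p : HeisenbergGroup β) : p⁻¹.y = -p.y := rfl
@[simp] lemma inv_z (p : HeisenbergGroup β) : p⁻¹.z = -p.z + β p.x p.y := rfl

instance : Group (HeisenbergGroup β) where
  mul_assoc p q r := by ext <;> simp <;> abel
  one_mul p := by ext <;> simp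
  mul_one p := by ext <;> simp
  inv_mul_cancel p := by ext <;> simp

def equivProd : HeisenbergGroup β ≃ X × Y × Z where
  toFun p := (p.x, p.y, p.z)
  invFun q := ⟨q.1, q.2.1, q.2.2⟩

lemma pow_eq_of_pairing_eq_zero {p : HeisenbergGroup β} (hp : β p.x p.y = 0) (s : ℕ) :
    p ^ s = ⟨s • p.x, s • p.y, s • p.z⟩ := by
  induction s with
  | zero => ext <;> simp
  | succ s ih => ext <;> simp [pow_succ, ih, hp, succ_nsmul]

lemma commutatorElement_eq (p q : HeisenbergGroup β) :
    ⁅p, q⁆ = ⟨0, 0, β p.x q.y - β q.x p.y⟩ := by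
  ext <;> simp [commutatorElement_def]
  abel

lemma commute_iff {p q : HeisenbergGroup β} : Commute p q ↔ β p.x q.y = β q.x p.y := by
  rw [← commutatorElement_eq_one_iff_commute, commutatorElement_eq, HeisenbergGroup.ext_iff]
  simp [sub_eq_zero]

lemma mem_center_iff {p : HeisenbergGroup β} :
    p ∈ center (HeisenbergGroup β) ↔ (∀ y, β p.x y = 0) ∧ ∀ x, β x p.y = 0 := by
  simp only [Subgroup.mem_center_iff, ← commute_iff_eq, commute_iff]
  refine ⟨fun h ↦ ⟨fun y ↦ ?_, fun x ↦ ?_⟩, fun ⟨hx, hy⟩ q ↦ by rw [hx, hy]⟩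
  · simpa using (h ⟨0, y, 0⟩).symm
  · simpa using h ⟨x, 0, 0⟩

end HeisenbergGroup

section GroupLemmas

lemma pow_val_add {M : Type*} [Monoid M] {g : M} {N : ℕ} [NeZero N] (hg : g ^ N = 1)
    (x y : ZMod N) : g ^ (x + y).val = g ^ x.val * g ^ y.val := by
  rw [ZMod.val_add, ← pow_eq_pow_mod _ hg, pow_add]

lemma pow_natCast_val {M : Type*} [Monoid M] {g : M} {N : ℕ} (hg : g ^ N = 1) (s : ℕ) :
    g ^ (s : ZMod N).val = g ^ s := by
  rw [ZMod.val_natCast, ← pow_eq_pow_mod _ hg]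

variable {G H : Type*} [Group G] [Group H]

lemma MulEquiv.map_commutator (e : G ≃* H) : (commutator G).map e.toMonoidHom = commutator H := by
  rw [map_commutator_eq, MonoidHom.range_eq_top.2 e.surjective, commutator_def]

lemma MulEquiv.map_center (e : G ≃* H) : (center G).map e.toMonoidHom = center H := by
  ext y
  rw [map_equiv_eq_comap_symm', mem_comap]
  exact MulEquivClass.apply_mem_center_iff e.symm

lemma nilClass_eq_two (hne : commutator G ≠ ⊥) (hle : commutator G ≤ center G) :
    nilClass G = 2 := by
  have h2 : (⊤ : Subgroup G).lowerCentralSeries 2 = ⊥ := by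
    rwa [Subgroup.lowerCentralSeries_succ, top_lowerCentralSeries_one,
      commutator_top_right_eq_bot_iff_le_center]
  refine le_antisymm (Nat.sInf_le h2) (le_csInf ⟨2, h2⟩ fun j hj ↦ ?_)
  by_contra! hj1
  exact hne (eq_bot_iff.2 (((⊤ : Subgroup G).lowerCentralSeries_antitone
    (Nat.lt_succ_iff.1 hj1)).trans hj.le))

end GroupLemmas

structure G4Relations {G : Type*} [Group G] (k : ℕ) (a b c : G) : Prop where
  pow_a : a ^ 2 ^ (k + 1) = 1
  sq_b : b ^ 2 = 1
  sq_c : c ^ 2 = 1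
  commute_ab : Commute a b
  commute_ac : Commute a c
  conj_b : c⁻¹ * b * c = a ^ 2 ^ k * b

lemma g4Relations_iff {G : Type*} [Group G] (k : ℕ) (a b c : G) :
    G4Relations k a b c ↔ ∀ r ∈ G4rels (k + 3), FreeGroup.lift ![a, b, c] r = 1 := by
  simp only [G4rels, Set.forall_mem_insert, Set.mem_singleton_iff, forall_eq, map_mul, map_inv,
    map_pow, FreeGroup.lift_apply_of, Matrix.cons_val_zero, Matrix.cons_val_one,
    Matrix.cons_val_two, show k + 3 - 2 = k + 1 by omega, show k + 3 - 3 = k by omega]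
  simp only [← commutatorElement_def, commutatorElement_eq_one_iff_commute, mul_inv_eq_one]
  exact ⟨fun ⟨h₁, h₂, h₃, h₄, h₅, h₆⟩ ↦ ⟨h₁, h₂, h₃, h₄, h₅, h₆⟩,
    fun ⟨h₁, h₂, h₃, h₄, h₅, h₆⟩ ↦ ⟨h₁, h₂, h₃, h₄, h₅, h₆⟩⟩

lemma g4Relations_of (k : ℕ) :
    G4Relations k (PresentedGroup.of 0 : PresentedGroup (G4rels (k + 3))) (.of 1) (.of 2) := by
  have hlift : FreeGroup.lift ![PresentedGroup.of 0, .of 1, .of 2] =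
      PresentedGroup.mk (G4rels (k + 3)) := by
    ext i
    fin_cases i <;> rfl
  rw [g4Relations_iff, hlift]
  exact fun r ↦ PresentedGroup.one_of_mem

lemma zmod_two_pow_ne_zero (k : ℕ) : (2 : ZMod (2 ^ (k + 1))) ^ k ≠ 0 := by
  have : ((2 ^ k : ℕ) : ZMod (2 ^ (k + 1))) ≠ 0 := by
    rw [Ne, ZMod.natCast_eq_zero_iff, Nat.pow_dvd_pow_iff_le_right one_lt_two]
    omega
  exact_mod_cast this

lemma zmod_two_eq_zero_or_eq_one (x : ZMod 2) : x = 0 ∨ x = 1 := by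
  decide +revert

def twoPowHom (k : ℕ) : ZMod 2 →+ ZMod (2 ^ (k + 1)) :=
  ZMod.lift 2 ⟨zmultiplesHom _ (2 ^ k), by
    rw [zmultiplesHom_apply, natCast_zsmul, two_nsmul, ← two_mul, ← pow_succ']
    exact_mod_cast ZMod.natCast_self (2 ^ (k + 1))⟩

@[simp] lemma twoPowHom_one (k : ℕ) : twoPowHom k 1 = 2 ^ k := by
  simpa [twoPowHom] using ZMod.lift_coe 2 ⟨zmultiplesHom (ZMod (2 ^ (k + 1))) (2 ^ k), _⟩ 1

def g4Pairing (k : ℕ) : ZMod 2 →+ ZMod 2 →+ ZMod (2 ^ (k + 1)) :=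
  AddMonoidHom.mul.compr₂ (twoPowHom k)

lemma g4Pairing_apply (k : ℕ) (x y : ZMod 2) : g4Pairing k x y = twoPowHom k (x * y) := rfl

lemma g4Pairing_eq_zero_iff {k : ℕ} {x y : ZMod 2} : g4Pairing k x y = 0 ↔ x = 0 ∨ y = 0 := by
  rcases zmod_two_eq_zero_or_eq_one x with rfl | rfl <;>
    rcases zmod_two_eq_zero_or_eq_one y with rfl | rfl <;>
    simp [g4Pairing_apply, zmod_two_pow_ne_zero]

abbrev G4Model (k : ℕ) := HeisenbergGroup (g4Pairing k)

namespace G4Model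

variable {k : ℕ}

def a : G4Model k := ⟨0, 0, 1⟩
def b : G4Model k := ⟨0, 1, 0⟩
def c : G4Model k := ⟨1, 0, 0⟩

lemma a_pow (s : ℕ) : (a : G4Model k) ^ s = ⟨0, 0, s⟩ := by
  rw [a, HeisenbergGroup.pow_eq_of_pairing_eq_zero (by simp)]
  simp

lemma b_pow (s : ℕ) : (b : G4Model k) ^ s = ⟨0, s, 0⟩ := by
  rw [b, HeisenbergGroup.pow_eq_of_pairing_eq_zero (by simp)]
  simp

lemma c_pow (s : ℕ) : (c : G4Model k) ^ s = ⟨s, 0, 0⟩ := by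
  rw [c, HeisenbergGroup.pow_eq_of_pairing_eq_zero (by simp)]
  simp

lemma relations : G4Relations k (a : G4Model k) b c where
  pow_a := by rw [a_pow]; ext <;> simp
  sq_b := by rw [b_pow]; ext <;> simp [CharTwo.two_eq_zero]
  sq_c := by rw [c_pow]; ext <;> simp [CharTwo.two_eq_zero]
  commute_ab := HeisenbergGroup.commute_iff.2 (by simp [a, b])
  commute_ac := HeisenbergGroup.commute_iff.2 (by simp [a, c])
  conj_b := by ext <;> simp [a_pow, b, c, g4Pairing_apply, CharTwo.add_self_eq_zero]

lemma a_pow_mul_b_pow_mul_c_pow (p : G4Model k) : a ^ p.z.val * b ^ p.y.val * c ^ p.x.val = p := by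
  ext <;> simp [a_pow, b_pow, c_pow]

lemma card : Nat.card (G4Model k) = 2 ^ (k + 3) := by
  rw [Nat.card_congr HeisenbergGroup.equivProd, Nat.card_prod, Nat.card_prod, Nat.card_zmod,
    Nat.card_zmod]
  ring

lemma a_pow_two_pow_ne_one : (a : G4Model k) ^ 2 ^ k ≠ 1 := by
  rw [a_pow, Ne, HeisenbergGroup.ext_iff]
  simpa using zmod_two_pow_ne_zero k

lemma center_eq : center (G4Model k) = zpowers a := by
  refine le_antisymm (fun p hp ↦ ?_) (zpowers_le.2 (HeisenbergGroup.mem_center_iff.2 ?_))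
  · obtain ⟨hx, hy⟩ := HeisenbergGroup.mem_center_iff.1 hp
    have hx0 : p.x = 0 := (g4Pairing_eq_zero_iff.1 (hx 1)).resolve_right one_ne_zero
    have hy0 : p.y = 0 := (g4Pairing_eq_zero_iff.1 (hy 1)).resolve_left one_ne_zero
    rw [← a_pow_mul_b_pow_mul_c_pow p, hx0, hy0, ZMod.val_zero, pow_zero, pow_zero, mul_one,
      mul_one]
    exact pow_mem (mem_zpowers a) _
  · simp [a]

lemma commutator_eq : commutator (G4Model k) = zpowers (a ^ 2 ^ k) := by
  refine le_antisymm (commutator_le.2 fun p _ q _ ↦ ?_) (zpowers_le.2 ?_)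
  · rw [HeisenbergGroup.commutatorElement_eq]
    simp only [g4Pairing_apply, ← map_sub]
    rcases zmod_two_eq_zero_or_eq_one (p.x * q.y - q.x * p.y) with h | h <;> rw [h]
    · convert (zpowers (a ^ 2 ^ k)).one_mem using 1
      ext <;> simp
    · convert mem_zpowers (a ^ 2 ^ k) using 1
      ext <;> simp [a_pow]
  · have : (a : G4Model k) ^ 2 ^ k = ⁅(c : G4Model k), b⁆ := by
      ext <;> simp [a_pow, HeisenbergGroup.commutatorElement_eq, b, c, g4Pairing_apply]
    rw [this]
    exact commutator_mem_commutator (mem_top c) (mem_top b)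

end G4Model

namespace G4Relations

variable {G : Type*} [Group G] {k : ℕ} {a b c : G} (h : G4Relations k a b c)
include h

lemma c_mul_b : c * b = a ^ 2 ^ k * b * c := by
  have hc : c⁻¹ = c := inv_eq_of_mul_eq_one_right (by rw [← sq, h.sq_c])
  rw [← h.conj_b, hc, mul_assoc _ c c, ← sq, h.sq_c, mul_one]

lemma c_pow_mul_b_pow (x y : ZMod 2) :
    c ^ x.val * b ^ y.val = a ^ (g4Pairing k x y).val * b ^ y.val * c ^ x.val := by
  rcases zmod_two_eq_zero_or_eq_one x with rfl | rfl
  · simp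
  rcases zmod_two_eq_zero_or_eq_one y with rfl | rfl
  · simp
  have : (g4Pairing k 1 1).val = ((2 ^ k : ℕ) : ZMod (2 ^ (k + 1))).val := by
    simp [g4Pairing_apply]
  rw [this, pow_natCast_val h.pow_a, ZMod.val_one, pow_one, pow_one, h.c_mul_b]

def lift : G4Model k →* G where
  toFun p := a ^ p.z.val * b ^ p.y.val * c ^ p.x.val
  map_one' := by simp
  map_mul' p q := by
    have hb (s t : ℕ) : Commute (a ^ s) (b ^ t) := h.commute_ab.pow_pow s t
    have hc (s t : ℕ) : Commute (a ^ s) (c ^ t) := h.commute_ac.pow_pow s t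
    simp only [HeisenbergGroup.mul_x, HeisenbergGroup.mul_y, HeisenbergGroup.mul_z,
      pow_val_add h.pow_a, pow_val_add h.sq_b, pow_val_add h.sq_c]
    -- move the powers of `a` to the front, commuting `c ^ _` past `b ^ _` on the way
    simp only [mul_assoc]
    rw [← (hc _ _).left_comm, ← (hb _ _).left_comm, ← mul_assoc (c ^ _) (b ^ _),
      h.c_pow_mul_b_pow]
    simp only [mul_assoc]
    rw [← (hb _ _).left_comm]

@[simp] lemma lift_a : h.lift G4Model.a = a := by
  simpa [lift, G4Model.a] using pow_natCast_val h.pow_a 1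

@[simp] lemma lift_b : h.lift G4Model.b = b := by
  simpa [lift, G4Model.b] using pow_natCast_val h.sq_b 1

@[simp] lemma lift_c : h.lift G4Model.c = c := by
  simpa [lift, G4Model.c] using pow_natCast_val h.sq_c 1

end G4Relations

namespace G4Model

variable (k : ℕ)

def presentedGroupEquiv : PresentedGroup (G4rels (k + 3)) ≃* G4Model k :=
  MonoidHom.toMulEquiv (PresentedGroup.toGroup ((g4Relations_iff k _ _ _).1 relations))
    (g4Relations_of k).lift
    (PresentedGroup.ext fun i ↦ by
      fin_cases i <;> simp [PresentedGroup.toGroup.of])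
    (MonoidHom.ext fun p ↦ by
      simpa [G4Relations.lift, PresentedGroup.toGroup.of] using a_pow_mul_b_pow_mul_c_pow p)

lemma presentedGroupEquiv_of_zero : presentedGroupEquiv k (.of 0) = a :=
  PresentedGroup.toGroup.of ((g4Relations_iff k _ _ _).1 relations)

end G4Model

/-- For `m ≥ 4` the group `G₄` has order `2^m`, commutator subgroup
`⟨a^{2^{m-3}}⟩` of order 2, center `⟨a⟩` cyclic of order `2^{m-2}`, and
nilpotency class 2. -/
theorem G4_invariants (m : ℕ) (hm : 4 ≤ m) :
    let G := PresentedGroup (G4rels m)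
    let a : G := PresentedGroup.of 0
    Nat.card G = 2 ^ m
    ∧ commutator G = Subgroup.zpowers (a ^ (2 ^ (m - 3)))
    ∧ Nat.card (commutator G) = 2
    ∧ Subgroup.center G = Subgroup.zpowers a
    ∧ IsCyclic (Subgroup.center G)
    ∧ Nat.card (Subgroup.center G) = 2 ^ (m - 2)
    ∧ nilClass G = 2 := by
  obtain ⟨k, rfl⟩ : ∃ k, m = k + 3 := ⟨m - 3, by omega⟩
  intro G a
  rw [show k + 3 - 2 = k + 1 by omega, Nat.add_sub_cancel]
  let e := G4Model.presentedGroupEquiv k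
  have he : e a = G4Model.a := G4Model.presentedGroupEquiv_of_zero k
  have hrel : G4Relations k a (.of 1) (.of 2) := g4Relations_of k
  have map_inj := Subgroup.map_injective (f := e.toMonoidHom) e.injective
  have hcomm : commutator G = zpowers (a ^ 2 ^ k) := map_inj <| by
    rw [e.map_commutator, MonoidHom.map_zpowers, map_pow, e.coe_toMonoidHom, he,
      G4Model.commutator_eq]
  have hcenter : center G = zpowers a := map_inj <| by
    rw [e.map_center, MonoidHom.map_zpowers, e.coe_toMonoidHom, he, G4Model.center_eq]
  have ha : a ^ 2 ^ k ≠ 1 := fun h ↦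
    G4Model.a_pow_two_pow_ne_one (by rw [← he, ← map_pow, h, map_one])
  refine ⟨(Nat.card_congr e.toEquiv).trans G4Model.card, hcomm, ?_, hcenter,
    hcenter ▸ inferInstance, ?_, nilClass_eq_two ?_ ?_⟩
  · have ha_sq : (a ^ 2 ^ k) ^ 2 = 1 := by rw [← pow_mul, ← pow_succ, hrel.pow_a]
    rw [hcomm, Nat.card_zpowers, orderOf_eq_prime ha_sq ha]
  · rw [hcenter, Nat.card_zpowers, orderOf_eq_prime_pow ha hrel.pow_a]
  · rwa [hcomm, Ne, zpowers_eq_bot]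
  · rw [hcomm, hcenter]
    exact zpowers_le.2 (pow_mem (mem_zpowers a) _)
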